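/- arXiv:2602.12861 — 2 statements merged into one kernel-verified Lean document; each statement's English description precedes it below -/
import Mathlib

section
/- If L is an FDD-lattice, then the poset pt(L) of points of L, ordered pointwise, is an algebraic domain: it is a dcpo and for every point p, the set of compact elements of pt(L) below p is directed with supremum p. -/
section Domains

variable (P : Type*) [PartialOrder P]

/-- A dcpo: every nonempty directed subset has a least upper bound. -/
def DirectedComplete : Prop :=
  ∀ D : Set P, D.Nonempty → DirectedOn (· ≤ ·) D → ∃ s, IsLUB D s

variable {P}

/-- A compact (finite) element of a poset. -/
def IsCompactElt (k : P) : Prop :=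
  ∀ D : Set P, D.Nonempty → DirectedOn (· ≤ ·) D → ∀ s : P, IsLUB D s → k ≤ s →
    ∃ d ∈ D, k ≤ d

/-- A Scott-open subset: an upper set inaccessible by directed suprema. -/
def ScottOpen (U : Set P) : Prop :=
  IsUpperSet U ∧ ∀ D : Set P, D.Nonempty → DirectedOn (· ≤ ·) D → ∀ s : P, IsLUB D s →
    s ∈ U → (D ∩ U).Nonempty

/-- Compactness of a set with respect to covers by Scott-open sets. -/
def ScottCompactSet (K : Set P) : Prop :=
  ∀ C : Set (Set P), (∀ V ∈ C, ScottOpen V) → K ⊆ ⋃₀ C →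
    ∃ F : Finset (Set P), ↑F ⊆ C ∧ K ⊆ ⋃₀ (F : Set (Set P))

variable (P)

/-- The collection of compact-open subsets (w.r.t. the Scott topology). -/
def CO : Set (Set P) := {U | ScottOpen U ∧ ScottCompactSet U}

/-- An algebraic domain: a dcpo in which, for every `x`, the set of compact elements
below `x` is a (nonempty) directed set with least upper bound `x`. -/
def IsAlgebraicDomain : Prop :=
  DirectedComplete P ∧
  ∀ x : P,
    (Set.Iic x ∩ {k | IsCompactElt k}).Nonempty ∧
    DirectedOn (· ≤ ·) (Set.Iic x ∩ {k | IsCompactElt k}) ∧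
    IsLUB (Set.Iic x ∩ {k | IsCompactElt k}) x

/-- Every principal ideal `↓x` is a complete lattice in the induced order
(equivalently: every subset of `↓x` has a least upper bound inside `↓x`). -/
def PrincipalIdealsComplete : Prop :=
  ∀ x : P, ∀ S : Set P, S ⊆ Set.Iic x →
    ∃ s, s ≤ x ∧ (∀ a ∈ S, a ≤ s) ∧ ∀ u, u ≤ x → (∀ a ∈ S, a ≤ u) → s ≤ u

/-- An algebraic L-domain. -/
def IsAlgebraicLDomain : Prop := IsAlgebraicDomain P ∧ PrincipalIdealsComplete P

/-- The Lawson topology: generated by the Scott-open sets together with complements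
of principal filters. -/
def lawsonTopology : TopologicalSpace P :=
  TopologicalSpace.generateFrom ({U | ScottOpen U} ∪ {U | ∃ x : P, U = (Set.Ici x)ᶜ})

/-- Lawson compactness: compactness in the Lawson topology. -/
def LawsonCompact : Prop := @CompactSpace P (lawsonTopology P)

end Domains

section FDD

variable {L : Type*} [Lattice L] [BoundedOrder L]

/-- A nonzero co-prime element. -/
def CoprimeElt (a : L) : Prop :=
  a ≠ ⊥ ∧ ∀ x y : L, a ≤ x ⊔ y → a ≤ x ∨ a ≤ y

/-- A finitely disjunctive distributive lattice (FDD-lattice): a bounded distributive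
lattice in which (1) every element is a finite join of nonzero co-primes, and
(2) the meet of two nonzero co-primes is a finite join of pairwise disjoint
nonzero co-primes. -/
def IsFDD (L : Type*) [DistribLattice L] [BoundedOrder L] : Prop :=
  (∀ x : L, ∃ F : Finset L, (∀ a ∈ F, CoprimeElt a) ∧ x = F.sup id) ∧
  (∀ a b : L, CoprimeElt a → CoprimeElt b →
    ∃ F : Finset L, (∀ c ∈ F, CoprimeElt c) ∧
      (∀ c ∈ F, ∀ d ∈ F, c ≠ d → c ⊓ d = ⊥) ∧ a ⊓ b = F.sup id)

/-- A point of a bounded lattice: a lattice homomorphism into the two-element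
bounded lattice `Bool` preserving `0`, `1`, binary meets and binary joins. -/
def IsPoint (p : L → Bool) : Prop :=
  p ⊥ = false ∧ p ⊤ = true ∧
  (∀ x y : L, p (x ⊓ y) = (p x && p y)) ∧
  (∀ x y : L, p (x ⊔ y) = (p x || p y))

end FDD

/-- The poset of points of a bounded lattice, with the pointwise order. -/
def Pt (L : Type*) [Lattice L] [BoundedOrder L] : Type _ :=
  {p : L → Bool // IsPoint p}

noncomputable instance (L : Type*) [Lattice L] [BoundedOrder L] : PartialOrder (Pt L) :=
  inferInstanceAs (PartialOrder {p : L → Bool // IsPoint p})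

/-- `γ_a : L → {0,1}`, `γ_a x = 1` iff `a ≤ x`. -/
noncomputable def gammaPt {L : Type*} [Lattice L] [BoundedOrder L] (a : L) : L → Bool :=
  fun x => @decide (a ≤ x) (Classical.propDecidable _)

/-- A bounded lattice homomorphism. -/
def IsBLH {L M : Type*} [Lattice L] [BoundedOrder L] [Lattice M] [BoundedOrder M]
    (f : L → M) : Prop :=
  f ⊥ = ⊥ ∧ f ⊤ = ⊤ ∧ (∀ x y, f (x ⊓ y) = f x ⊓ f y) ∧ (∀ x y, f (x ⊔ y) = f x ⊔ f y)


/-!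
A point `p` is determined by the nonzero co-primes it contains: each such `a` gives the point
`γ_a`, with `γ_a ≤ p` iff `p a = 1`. Directed suprema of points are computed pointwise, so every
`γ_a` is compact. If every element is a finite join of co-primes, then `p x = 1` iff `p a = 1`
for some co-prime `a ≤ x`; hence the `γ_a` below `p` have supremum `p`, and they are directed
because a co-prime `c ≤ a ⊓ b` with `p c = 1` gives `γ_a, γ_b ≤ γ_c`.
-/

section AlgebraicDomain

variable {P : Type*} [PartialOrder P]

theorem isAlgebraicDomain_of_exists_directed_isLUB (hP : DirectedComplete P)
    (h : ∀ x : P, ∃ D ⊆ {k : P | IsCompactElt k}, D.Nonempty ∧ DirectedOn (· ≤ ·) D ∧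
      IsLUB D x) :
    IsAlgebraicDomain P := by
  refine ⟨hP, fun x => ?_⟩
  obtain ⟨D, hDc, hne, hdir, hlub⟩ := h x
  have hD : D ⊆ Set.Iic x ∩ {k | IsCompactElt k} := fun d hd => ⟨hlub.1 hd, hDc hd⟩
  have below_D {k : P} (hk : k ∈ Set.Iic x ∩ {k | IsCompactElt k}) : ∃ d ∈ D, k ≤ d :=
    hk.2 D hne hdir x hlub hk.1
  refine ⟨hne.mono hD, fun k hk k' hk' => ?_, ⟨fun k hk => hk.1, fun u hu => ?_⟩⟩
  · obtain ⟨d, hd, hkd⟩ := below_D hk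
    obtain ⟨d', hd', hkd'⟩ := below_D hk'
    obtain ⟨e, he, hde, hd'e⟩ := hdir d hd d' hd'
    exact ⟨e, hD he, hkd.trans hde, hkd'.trans hd'e⟩
  · exact hlub.2 fun d hd => hu (hD hd)

end AlgebraicDomain

section Points

variable {L : Type*} [Lattice L] [BoundedOrder L]

def IsCoprimeGenerated (L : Type*) [Lattice L] [BoundedOrder L] : Prop :=
  ∀ x : L, ∃ F : Finset L, (∀ a ∈ F, CoprimeElt a) ∧ x = F.sup id

namespace IsPoint

variable {p : L → Bool} (hp : IsPoint p)
include hp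

theorem inf_eq_true {x y : L} : p (x ⊓ y) = true ↔ p x = true ∧ p y = true := by
  rw [hp.2.2.1, Bool.and_eq_true]

theorem sup_eq_true {x y : L} : p (x ⊔ y) = true ↔ p x = true ∨ p y = true := by
  rw [hp.2.2.2, Bool.or_eq_true]

theorem eq_true_of_le {x y : L} (hxy : x ≤ y) (hx : p x = true) : p y = true := by
  simpa only [sup_eq_right.mpr hxy] using (hp.sup_eq_true (y := y)).mpr (Or.inl hx)

theorem finset_sup_eq_true {F : Finset L} : p (F.sup id) = true ↔ ∃ a ∈ F, p a = true := by
  classical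
  induction F using Finset.induction_on with
  | empty => simp [hp.1]
  | insert a F _ ih => simp [Finset.sup_insert, hp.sup_eq_true, ih]

theorem exists_coprime_le (hL : IsCoprimeGenerated L) {x : L} (hx : p x = true) :
    ∃ a, CoprimeElt a ∧ a ≤ x ∧ p a = true := by
  obtain ⟨F, hF, rfl⟩ := hL x
  obtain ⟨a, ha, hpa⟩ := hp.finset_sup_eq_true.mp hx
  exact ⟨a, hF a ha, Finset.le_sup (f := id) ha, hpa⟩

end IsPoint

theorem gammaPt_eq_true {a x : L} : gammaPt a x = true ↔ a ≤ x := by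
  simp [gammaPt]

theorem isPoint_gammaPt {a : L} (ha : CoprimeElt a) : IsPoint (gammaPt a) := by
  refine ⟨?_, gammaPt_eq_true.mpr le_top, fun x y => ?_, fun x y => ?_⟩
  · exact Bool.eq_false_iff.mpr fun h => ha.1 (le_bot_iff.mp (gammaPt_eq_true.mp h))
  · rw [Bool.eq_iff_iff]
    simp only [Bool.and_eq_true, gammaPt_eq_true, le_inf_iff]
  · rw [Bool.eq_iff_iff]
    simp only [Bool.or_eq_true, gammaPt_eq_true]
    exact ⟨ha.2 x y, fun h => h.elim le_sup_of_le_left le_sup_of_le_right⟩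

namespace Pt

theorem le_iff {p q : Pt L} : p ≤ q ↔ ∀ x, p.1 x = true → q.1 x = true :=
  forall_congr' fun _ => Bool.le_iff_imp

noncomputable def gamma {a : L} (ha : CoprimeElt a) : Pt L :=
  ⟨gammaPt a, isPoint_gammaPt ha⟩

theorem gamma_le_iff {a : L} (ha : CoprimeElt a) {p : Pt L} : gamma ha ≤ p ↔ p.1 a = true :=
  ⟨fun h => le_iff.mp h a (gammaPt_eq_true.mpr le_rfl),
    fun h => le_iff.mpr fun _ hx => p.2.eq_true_of_le (gammaPt_eq_true.mp hx) h⟩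

open Classical in
noncomputable def directedSup (D : Set (Pt L)) : L → Bool :=
  fun x => decide (∃ p ∈ D, p.1 x = true)

theorem directedSup_eq_true {D : Set (Pt L)} {x : L} :
    directedSup D x = true ↔ ∃ p ∈ D, p.1 x = true := by
  simp [directedSup]

variable {D : Set (Pt L)} (hne : D.Nonempty) (hdir : DirectedOn (· ≤ ·) D)
include hne hdir

theorem isPoint_directedSup : IsPoint (directedSup D) := by
  refine ⟨?_, ?_, fun x y => ?_, fun x y => ?_⟩
  · simp [directedSup, fun p : Pt L => p.2.1]
  · obtain ⟨p, hp⟩ := hne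
    exact directedSup_eq_true.mpr ⟨p, hp, p.2.2.1⟩
  · rw [Bool.eq_iff_iff]
    simp only [Bool.and_eq_true, directedSup_eq_true]
    refine ⟨fun ⟨p, hpD, hp⟩ => ?_, fun ⟨⟨p, hpD, hp⟩, ⟨q, hqD, hq⟩⟩ => ?_⟩
    · rw [p.2.inf_eq_true] at hp
      exact ⟨⟨p, hpD, hp.1⟩, ⟨p, hpD, hp.2⟩⟩
    · obtain ⟨r, hrD, hpr, hqr⟩ := hdir p hpD q hqD
      exact ⟨r, hrD, r.2.inf_eq_true.mpr ⟨le_iff.mp hpr x hp, le_iff.mp hqr y hq⟩⟩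
  · rw [Bool.eq_iff_iff]
    simp only [Bool.or_eq_true, directedSup_eq_true]
    refine ⟨fun ⟨p, hpD, hp⟩ => ?_, ?_⟩
    · exact (p.2.sup_eq_true.mp hp).imp (fun h => ⟨p, hpD, h⟩) (fun h => ⟨p, hpD, h⟩)
    · rintro (⟨p, hpD, hp⟩ | ⟨p, hpD, hp⟩)
      · exact ⟨p, hpD, p.2.eq_true_of_le le_sup_left hp⟩
      · exact ⟨p, hpD, p.2.eq_true_of_le le_sup_right hp⟩

theorem isLUB_directedSup : IsLUB D (⟨directedSup D, isPoint_directedSup hne hdir⟩ : Pt L) :=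
  ⟨fun p hp => le_iff.mpr fun _ hx => directedSup_eq_true.mpr ⟨p, hp, hx⟩,
    fun q hq => le_iff.mpr fun x hx => by
      obtain ⟨p, hpD, hp⟩ := directedSup_eq_true.mp hx
      exact le_iff.mp (hq hpD) x hp⟩

omit hne hdir

theorem directedComplete : DirectedComplete (Pt L) :=
  fun _ hne hdir => ⟨_, isLUB_directedSup hne hdir⟩

theorem isCompactElt_gamma {a : L} (ha : CoprimeElt a) : IsCompactElt (gamma ha) := by
  intro D hne hdir s hs hle
  obtain rfl := hs.unique (isLUB_directedSup hne hdir)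
  obtain ⟨p, hpD, hp⟩ := directedSup_eq_true.mp ((gamma_le_iff ha).mp hle)
  exact ⟨p, hpD, (gamma_le_iff ha).mpr hp⟩

def gammasBelow (p : Pt L) : Set (Pt L) :=
  {q | ∃ a, ∃ ha : CoprimeElt a, p.1 a = true ∧ q = gamma ha}

theorem gammasBelow_subset (p : Pt L) : gammasBelow p ⊆ {k | IsCompactElt k} := by
  rintro _ ⟨a, ha, -, rfl⟩
  exact isCompactElt_gamma ha

variable (hL : IsCoprimeGenerated L) (p : Pt L)
include hL

theorem gammasBelow_nonempty : (gammasBelow p).Nonempty := by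
  obtain ⟨a, ha, -, hpa⟩ := p.2.exists_coprime_le hL p.2.2.1
  exact ⟨_, a, ha, hpa, rfl⟩

theorem directedOn_gammasBelow : DirectedOn (· ≤ ·) (gammasBelow p) := by
  rintro _ ⟨a, ha, hpa, rfl⟩ _ ⟨b, hb, hpb, rfl⟩
  obtain ⟨c, hc, hcab, hpc⟩ := p.2.exists_coprime_le hL (p.2.inf_eq_true.mpr ⟨hpa, hpb⟩)
  exact ⟨gamma hc, ⟨c, hc, hpc, rfl⟩,
    (gamma_le_iff ha).mpr (gammaPt_eq_true.mpr (hcab.trans inf_le_left)),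
    (gamma_le_iff hb).mpr (gammaPt_eq_true.mpr (hcab.trans inf_le_right))⟩

theorem isLUB_gammasBelow : IsLUB (gammasBelow p) p := by
  refine ⟨?_, fun q hq => le_iff.mpr fun x hx => ?_⟩
  · rintro _ ⟨a, ha, hpa, rfl⟩
    exact (gamma_le_iff ha).mpr hpa
  · obtain ⟨a, ha, hax, hpa⟩ := p.2.exists_coprime_le hL hx
    exact q.2.eq_true_of_le hax ((gamma_le_iff ha).mp (hq ⟨a, ha, hpa, rfl⟩))

end Pt

end Points

/-- For an FDD-lattice `L`, the poset `Pt L` of points with the pointwise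
order is an algebraic domain. -/
theorem stmt8 {L : Type*} [DistribLattice L] [BoundedOrder L] (hL : IsFDD L) :
    IsAlgebraicDomain (Pt L) := by
  refine isAlgebraicDomain_of_exists_directed_isLUB Pt.directedComplete fun p => ?_
  exact ⟨Pt.gammasBelow p, Pt.gammasBelow_subset p, Pt.gammasBelow_nonempty hL.1 p,
    Pt.directedOn_gammasBelow hL.1 p, Pt.isLUB_gammasBelow hL.1 p⟩
end

section
/- Every Lawson compact algebraic L-domain M is order-isomorphic to pt(CO(M)), the poset of points of the lattice of compact-open subsets of M, via the map θ_M sending x ∈ M to the directed supremum of {γ_{↑k} : k ∈ ↓x ∩ K(M)}, where γ_{↑k} : CO(M) → {0,1} maps U to 1 iff ↑k ⊆ U. -/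
/-- A point of the bounded lattice `CO P` of compact-open sets, encoded as a
`Bool`-valued map on `Set P` preserving `∅` (the bottom), `univ` (the top), and binary
meets (intersections) and joins (unions) of compact-open sets. -/
def IsPointOnCO (P : Type*) [PartialOrder P] (p : Set P → Bool) : Prop :=
  p ∅ = false ∧ p Set.univ = true ∧
  ∀ U ∈ CO P, ∀ V ∈ CO P,
    p (U ∩ V) = (p U && p V) ∧ p (U ∪ V) = (p U || p V)

/-- `θ_M x`: the (pointwise, directed) supremum of `{γ_{↑k} : k ∈ ↓x ∩ K(M)}`, where
`γ_{↑k} U = 1` iff `↑k ⊆ U`. -/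
noncomputable def thetaMap {P : Type*} [PartialOrder P] (x : P) : Set P → Bool :=
  fun U => @decide (∃ k : P, IsCompactElt k ∧ k ≤ x ∧ Set.Ici k ⊆ U)
    (Classical.propDecidable _)


/-!
The principal filters `↑k` of compact elements `k` are compact-open, and by algebraicity every
compact-open set is a finite union of them. Lawson compactness makes every Lawson-closed set Scott
compact, so `univ` and `↑k₁ ∩ ↑k₂` are compact-open as well. Hence a point `p` of `CO M` is
determined by the compact elements `k` with `p ↑k = 1`; these form a directed set (a point
preserves `∩`), and its supremum `x` satisfies `p = θ x`. That `θ` reflects the order is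
algebraicity again: `x` is the supremum of the compact elements below it.
-/

open Topology

section ScottCompactOpen

variable {M : Type*} [PartialOrder M]

theorem scottOpen_Ici {k : M} (hk : IsCompactElt k) : ScottOpen (Set.Ici k) :=
  ⟨isUpperSet_Ici k, hk⟩

theorem ScottOpen.inter {U V : Set M} (hU : ScottOpen U) (hV : ScottOpen V) :
    ScottOpen (U ∩ V) := by
  refine ⟨hU.1.inter hV.1, ?_⟩
  rintro D hD hdir s hs ⟨hsU, hsV⟩
  obtain ⟨d₁, hd₁, hd₁U⟩ := hU.2 D hD hdir s hs hsU
  obtain ⟨d₂, hd₂, hd₂V⟩ := hV.2 D hD hdir s hs hsV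
  obtain ⟨d, hd, hd₁d, hd₂d⟩ := hdir d₁ hd₁ d₂ hd₂
  exact ⟨d, hd, hU.1 hd₁d hd₁U, hV.1 hd₂d hd₂V⟩

theorem ScottOpen.union {U V : Set M} (hU : ScottOpen U) (hV : ScottOpen V) :
    ScottOpen (U ∪ V) := by
  refine ⟨hU.1.union hV.1, ?_⟩
  rintro D hD hdir s hs (hsU | hsV)
  · obtain ⟨d, hd, hdU⟩ := hU.2 D hD hdir s hs hsU
    exact ⟨d, hd, Or.inl hdU⟩
  · obtain ⟨d, hd, hdV⟩ := hV.2 D hD hdir s hs hsV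
    exact ⟨d, hd, Or.inr hdV⟩

theorem ScottCompactSet.union {U V : Set M} (hU : ScottCompactSet U)
    (hV : ScottCompactSet V) : ScottCompactSet (U ∪ V) := by
  classical
  intro C hC hcov
  obtain ⟨F₁, hF₁C, hUF₁⟩ := hU C hC (Set.subset_union_left.trans hcov)
  obtain ⟨F₂, hF₂C, hVF₂⟩ := hV C hC (Set.subset_union_right.trans hcov)
  refine ⟨F₁ ∪ F₂, by simpa using Set.union_subset hF₁C hF₂C, ?_⟩
  rw [Finset.coe_union, Set.sUnion_union]
  exact Set.union_subset_union hUF₁ hVF₂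

theorem Ici_mem_CO {k : M} (hk : IsCompactElt k) : Set.Ici k ∈ CO M := by
  refine ⟨scottOpen_Ici hk, fun C hC hcov => ?_⟩
  obtain ⟨V, hVC, hkV⟩ := hcov Set.self_mem_Ici
  refine ⟨{V}, by simpa using hVC, ?_⟩
  rw [Finset.coe_singleton, Set.sUnion_singleton]
  exact fun _ hka => (hC V hVC).1 hka hkV

theorem empty_mem_CO : (∅ : Set M) ∈ CO M :=
  ⟨⟨isUpperSet_empty, fun _ _ _ _ _ hs => hs.elim⟩, fun _ _ _ => ⟨∅, by simp, by simp⟩⟩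

theorem union_mem_CO {U V : Set M} (hU : U ∈ CO M) (hV : V ∈ CO M) : U ∪ V ∈ CO M :=
  ⟨hU.1.union hV.1, hU.2.union hV.2⟩

theorem sUnion_mem_CO {F : Finset (Set M)} (hF : ∀ V ∈ F, V ∈ CO M) :
    ⋃₀ (F : Set (Set M)) ∈ CO M := by
  classical
  induction F using Finset.induction_on with
  | empty => simpa using empty_mem_CO
  | insert V F _ ih =>
    rw [Finset.coe_insert, Set.sUnion_insert]
    exact union_mem_CO (hF V (F.mem_insert_self V))
      (ih fun W hW => hF W (Finset.mem_insert_of_mem hW))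

theorem ScottOpen.isOpen_lawson {U : Set M} (hU : ScottOpen U) :
    IsOpen[lawsonTopology M] U :=
  .basic U (Or.inl hU)

theorem isClosed_lawson_Ici (x : M) : IsClosed[lawsonTopology M] (Set.Ici x) :=
  @IsClosed.mk _ (lawsonTopology M) _ (.basic _ (Or.inr ⟨x, rfl⟩))

theorem LawsonCompact.scottCompactSet {A : Set M} (h : LawsonCompact M)
    (hA : IsClosed[lawsonTopology M] A) : ScottCompactSet A := by
  let _ := lawsonTopology M
  have : CompactSpace M := h
  intro C hC hcov
  obtain ⟨C', hC'C, hC'fin, hAC'⟩ := hA.isCompact.elim_finite_subcover_image (c := id)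
    (fun V hV => (hC V hV).isOpen_lawson) (by simpa [Set.sUnion_eq_biUnion] using hcov)
  exact ⟨hC'fin.toFinset, by simpa using hC'C, by simpa [Set.sUnion_eq_biUnion] using hAC'⟩

theorem LawsonCompact.univ_mem_CO (h : LawsonCompact M) : (Set.univ : Set M) ∈ CO M :=
  ⟨⟨isUpperSet_univ, fun _ hD _ _ _ _ => by simpa using hD⟩,
    h.scottCompactSet (@isClosed_univ M (lawsonTopology M))⟩

theorem LawsonCompact.Ici_inter_Ici_mem_CO (h : LawsonCompact M) {k₁ k₂ : M}
    (hk₁ : IsCompactElt k₁) (hk₂ : IsCompactElt k₂) : Set.Ici k₁ ∩ Set.Ici k₂ ∈ CO M :=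
  ⟨(scottOpen_Ici hk₁).inter (scottOpen_Ici hk₂),
    h.scottCompactSet (@IsClosed.inter _ _ _ (lawsonTopology M)
      (isClosed_lawson_Ici k₁) (isClosed_lawson_Ici k₂))⟩

theorem IsAlgebraicDomain.exists_finset_Ici_cover (h : IsAlgebraicDomain M) {U : Set M}
    (hU : U ∈ CO M) :
    ∃ F : Finset (Set M), (∀ V ∈ F, ∃ k, IsCompactElt k ∧ k ∈ U ∧ V = Set.Ici k) ∧
      U ⊆ ⋃₀ (F : Set (Set M)) := by
  let C : Set (Set M) := {V | ∃ k, IsCompactElt k ∧ k ∈ U ∧ V = Set.Ici k}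
  have hCopen : ∀ V ∈ C, ScottOpen V := by
    rintro V ⟨k, hk, -, rfl⟩
    exact scottOpen_Ici hk
  have hUC : U ⊆ ⋃₀ C := by
    intro x hx
    obtain ⟨hne, hdir, hlub⟩ := h.2 x
    obtain ⟨k, ⟨hkx, hk⟩, hkU⟩ := hU.1.2 _ hne hdir x hlub hx
    exact ⟨Set.Ici k, ⟨k, hk, hkU, rfl⟩, hkx⟩
  obtain ⟨F, hFC, hUF⟩ := hU.2 C hCopen hUC
  exact ⟨F, fun V hV => hFC hV, hUF⟩

end ScottCompactOpen

namespace IsPointOnCO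

variable {M : Type*} [PartialOrder M] {p : Set M → Bool}

theorem mono (hp : IsPointOnCO M p) {U V : Set M} (hU : U ∈ CO M) (hV : V ∈ CO M)
    (hUV : U ⊆ V) (hpU : p U = true) : p V = true := by
  have h := (hp.2.2 U hU V hV).2
  rw [Set.union_eq_self_of_subset_left hUV, hpU, Bool.true_or] at h
  exact h

theorem exists_of_sUnion (hp : IsPointOnCO M p) {F : Finset (Set M)}
    (hF : ∀ V ∈ F, V ∈ CO M) (hpF : p (⋃₀ (F : Set (Set M))) = true) :
    ∃ V ∈ F, p V = true := by
  classical
  induction F using Finset.induction_on with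
  | empty => simp [hp.1] at hpF
  | insert V F _ ih =>
    have hFCO : ∀ W ∈ F, W ∈ CO M := fun W hW => hF W (Finset.mem_insert_of_mem hW)
    rw [Finset.coe_insert, Set.sUnion_insert,
      (hp.2.2 V (hF V (F.mem_insert_self V)) _ (sUnion_mem_CO hFCO)).2,
      Bool.or_eq_true] at hpF
    rcases hpF with hpV | hpF
    · exact ⟨V, F.mem_insert_self V, hpV⟩
    · obtain ⟨W, hW, hpW⟩ := ih hFCO hpF
      exact ⟨W, Finset.mem_insert_of_mem hW, hpW⟩

theorem exists_Ici_subset (hp : IsPointOnCO M p) (h : IsAlgebraicDomain M) {U : Set M}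
    (hU : U ∈ CO M) (hpU : p U = true) :
    ∃ k, IsCompactElt k ∧ Set.Ici k ⊆ U ∧ p (Set.Ici k) = true := by
  obtain ⟨F, hF, hUF⟩ := h.exists_finset_Ici_cover hU
  have hFCO : ∀ V ∈ F, V ∈ CO M := by
    intro V hV
    obtain ⟨k, hk, -, rfl⟩ := hF V hV
    exact Ici_mem_CO hk
  obtain ⟨V, hVF, hpV⟩ := hp.exists_of_sUnion hFCO (hp.mono hU (sUnion_mem_CO hFCO) hUF hpU)
  obtain ⟨k, hk, hkU, rfl⟩ := hF V hVF
  exact ⟨k, hk, fun _ hka => hU.1.1 hka hkU, hpV⟩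

theorem directedOn_compact_Ici (hp : IsPointOnCO M p) (h : IsAlgebraicDomain M)
    (hM : LawsonCompact M) :
    DirectedOn (· ≤ ·) {k | IsCompactElt k ∧ p (Set.Ici k) = true} := by
  rintro k₁ ⟨hk₁, hp₁⟩ k₂ ⟨hk₂, hp₂⟩
  have hpW : p (Set.Ici k₁ ∩ Set.Ici k₂) = true := by
    rw [(hp.2.2 _ (Ici_mem_CO hk₁) _ (Ici_mem_CO hk₂)).1, hp₁, hp₂, Bool.and_self]
  obtain ⟨k, hk, hkW, hpk⟩ := hp.exists_Ici_subset h (hM.Ici_inter_Ici_mem_CO hk₁ hk₂) hpW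
  exact ⟨k, ⟨hk, hpk⟩, hkW Set.self_mem_Ici⟩

end IsPointOnCO

section Theta

variable {M : Type*} [PartialOrder M]

theorem thetaMap_eq_true {x : M} {U : Set M} :
    thetaMap x U = true ↔ ∃ k, IsCompactElt k ∧ k ≤ x ∧ Set.Ici k ⊆ U := by
  simp [thetaMap]

theorem thetaMap_Ici_eq_true {x k : M} (hk : IsCompactElt k) :
    thetaMap x (Set.Ici k) = true ↔ k ≤ x := by
  rw [thetaMap_eq_true]
  refine ⟨fun ⟨k', _, hk'x, hk'k⟩ => (hk'k Set.self_mem_Ici).trans hk'x,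
    fun hkx => ⟨k, hk, hkx, subset_rfl⟩⟩

theorem thetaMap_mono {x y : M} (hxy : x ≤ y) (U : Set M) : thetaMap x U ≤ thetaMap y U := by
  simp only [Bool.le_iff_imp, thetaMap_eq_true]
  exact fun ⟨k, hk, hkx, hkU⟩ => ⟨k, hk, hkx.trans hxy, hkU⟩

theorem IsAlgebraicDomain.isPointOnCO_thetaMap (h : IsAlgebraicDomain M) (x : M) :
    IsPointOnCO M (thetaMap x) := by
  obtain ⟨⟨k₀, hk₀x, hk₀⟩, hdir, -⟩ := h.2 x
  refine ⟨?_, ?_, fun U hU V hV => ⟨?_, ?_⟩⟩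
  · rw [← Bool.not_eq_true, thetaMap_eq_true]
    exact fun ⟨_, _, _, hk⟩ => hk Set.self_mem_Ici
  · exact thetaMap_eq_true.2 ⟨k₀, hk₀, hk₀x, Set.subset_univ _⟩
  · rw [Bool.eq_iff_iff]
    simp only [Bool.and_eq_true, thetaMap_eq_true, Set.subset_inter_iff]
    constructor
    · rintro ⟨k, hk, hkx, hkU, hkV⟩
      exact ⟨⟨k, hk, hkx, hkU⟩, ⟨k, hk, hkx, hkV⟩⟩
    · rintro ⟨⟨k₁, hk₁, hk₁x, hk₁U⟩, ⟨k₂, hk₂, hk₂x, hk₂V⟩⟩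
      obtain ⟨k, ⟨hkx, hk⟩, hk₁k, hk₂k⟩ := hdir k₁ ⟨hk₁x, hk₁⟩ k₂ ⟨hk₂x, hk₂⟩
      exact ⟨k, hk, hkx, (Set.Ici_subset_Ici.2 hk₁k).trans hk₁U,
        (Set.Ici_subset_Ici.2 hk₂k).trans hk₂V⟩
  · rw [Bool.eq_iff_iff]
    simp only [Bool.or_eq_true, thetaMap_eq_true]
    constructor
    · rintro ⟨k, hk, hkx, hkUV⟩
      rcases hkUV Set.self_mem_Ici with hkU | hkV
      · exact Or.inl ⟨k, hk, hkx, fun _ hka => hU.1.1 hka hkU⟩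
      · exact Or.inr ⟨k, hk, hkx, fun _ hka => hV.1.1 hka hkV⟩
    · rintro (⟨k, hk, hkx, hkU⟩ | ⟨k, hk, hkx, hkV⟩)
      · exact ⟨k, hk, hkx, hkU.trans Set.subset_union_left⟩
      · exact ⟨k, hk, hkx, hkV.trans Set.subset_union_right⟩

theorem IsAlgebraicDomain.le_iff_thetaMap_le (h : IsAlgebraicDomain M) (x y : M) :
    x ≤ y ↔ ∀ U ∈ CO M, thetaMap x U ≤ thetaMap y U := by
  refine ⟨fun hxy U _ => thetaMap_mono hxy U, fun hθ => (h.2 x).2.2.2 ?_⟩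
  rintro k ⟨hkx, hk⟩
  have hθk := hθ _ (Ici_mem_CO hk)
  rw [(thetaMap_Ici_eq_true hk).2 hkx, Bool.le_iff_imp] at hθk
  exact (thetaMap_Ici_eq_true hk).1 (hθk rfl)

theorem IsPointOnCO.exists_eq_thetaMap {p : Set M → Bool} (hp : IsPointOnCO M p)
    (h : IsAlgebraicDomain M) (hM : LawsonCompact M) :
    ∃ x : M, ∀ U ∈ CO M, p U = thetaMap x U := by
  let D := {k | IsCompactElt k ∧ p (Set.Ici k) = true}
  have hDne : D.Nonempty := by
    obtain ⟨k, hk, -, hpk⟩ := hp.exists_Ici_subset h hM.univ_mem_CO hp.2.1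
    exact ⟨k, hk, hpk⟩
  have hDdir := hp.directedOn_compact_Ici h hM
  obtain ⟨x, hx⟩ := h.1 D hDne hDdir
  refine ⟨x, fun U hU => Bool.eq_iff_iff.2 ?_⟩
  rw [thetaMap_eq_true]
  constructor
  · intro hpU
    obtain ⟨k, hk, hkU, hpk⟩ := hp.exists_Ici_subset h hU hpU
    exact ⟨k, hk, hx.1 ⟨hk, hpk⟩, hkU⟩
  · rintro ⟨k, hk, hkx, hkU⟩
    obtain ⟨d, ⟨hd, hpd⟩, hkd⟩ := hk D hDne hDdir x hx hkx
    exact hp.mono (Ici_mem_CO hd) hU ((Set.Ici_subset_Ici.2 hkd).trans hkU) hpd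

end Theta

/-- Every Lawson compact algebraic L-domain `M` is order-isomorphic to
`pt(CO M)` via `θ_M`: each `θ_M x` is a point of `CO M`, `θ_M` is an order embedding
(for the pointwise order of points, compared on `CO M`), and every point of `CO M`
agrees on `CO M` with some `θ_M x`. -/
theorem stmt15 {M : Type*} [PartialOrder M]
    (h1 : IsAlgebraicLDomain M) (h2 : LawsonCompact M) :
    (∀ x : M, IsPointOnCO M (thetaMap x)) ∧
    (∀ x y : M, x ≤ y ↔ ∀ U ∈ CO M, thetaMap x U ≤ thetaMap y U) ∧
    (∀ p : Set M → Bool, IsPointOnCO M p → ∃ x : M, ∀ U ∈ CO M, p U = thetaMap x U) :=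
  ⟨h1.1.isPointOnCO_thetaMap, h1.1.le_iff_thetaMap_le,
    fun _ hp => hp.exists_eq_thetaMap h1.1 h2⟩
end
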